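/- arXiv:1411.5501 — 2 statements merged into one kernel-verified Lean document; each statement's English description precedes it below -/
import Mathlib

section
/- Let N ≥ 1, let g : ℝ^N → ℝ and v : ℝ^N → ℝ^N both be of class C². Define the vector field w by w_j := Σ_{i=1}^N ∂_i g · (curl v)_{ij}. Then for all indices k, j and all x ∈ ℝ^N, (curl w)_{kj}(x) = Σ_i ∂_i g(x) ∂_i((curl v)_{kj})(x) + Σ_i (∂_i∂_k g(x) (curl v)_{ij}(x) − ∂_i∂_j g(x) (curl v)_{ik}(x)); that is, curl(∇g · curl v) = (∇g·∇)(curl v) + Hess(g)-commutator terms. -/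
open scoped BigOperators

/-- Partial derivative in the `i`-th coordinate direction on `ℝ^N`. -/
noncomputable def pd {N : ℕ} (i : Fin N) (f : (Fin N → ℝ) → ℝ) :
    (Fin N → ℝ) → ℝ :=
  fun x => fderiv ℝ f x (Pi.single i 1)

/-- Matrix-valued curl of a vector field: `(curl w)_{ij} = ∂_i w_j − ∂_j w_i`. -/
noncomputable def curlM {N : ℕ} (w : (Fin N → ℝ) → Fin N → ℝ) (i j : Fin N) :
    (Fin N → ℝ) → ℝ :=
  fun x => pd i (fun y => w y j) x - pd j (fun y => w y i) x

/-! Differentiate `wⱼ = ∑ᵢ ∂ᵢg (curl v)ᵢⱼ` by the Leibniz rule. The terms carrying second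
derivatives of `g` form the Hessian commutator. In the others, symmetry of the second derivatives
of `v` gives `∂ₖ(curl v)ᵢⱼ − ∂ⱼ(curl v)ᵢₖ = ∂ᵢ(curl v)ₖⱼ` (the 2-form `curl v` is closed), which
turns them into `(∇g·∇)(curl v)ₖⱼ`. -/

namespace pd

variable {N : ℕ} {f h : (Fin N → ℝ) → ℝ} {x : Fin N → ℝ}

theorem sub_apply (hf : DifferentiableAt ℝ f x) (hh : DifferentiableAt ℝ h x) (k : Fin N) :
    pd k (fun y => f y - h y) x = pd k f x - pd k h x := by
  simp only [pd, fderiv_fun_sub hf hh, _root_.sub_apply]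

theorem sum_mul_apply {ι : Type*} (s : Finset ι) {f h : ι → (Fin N → ℝ) → ℝ}
    (hf : ∀ i ∈ s, DifferentiableAt ℝ (f i) x) (hh : ∀ i ∈ s, DifferentiableAt ℝ (h i) x)
    (k : Fin N) :
    pd k (fun y => ∑ i ∈ s, f i y * h i y) x
      = ∑ i ∈ s, (pd k (f i) x * h i x + f i x * pd k (h i) x) := by
  have hfh : ∀ i ∈ s, DifferentiableAt ℝ (fun y => f i y * h i y) x :=
    fun i hi => (hf i hi).mul (hh i hi)
  rw [pd, fderiv_fun_sum hfh, _root_.sum_apply]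
  refine Finset.sum_congr rfl fun i hi => ?_
  rw [fderiv_fun_mul (hf i hi) (hh i hi)]
  simp only [pd, _root_.add_apply, _root_.smul_apply, smul_eq_mul]
  ring

theorem differentiableAt (hf : ContDiffAt ℝ 2 f x) (i : Fin N) :
    DifferentiableAt ℝ (pd i f) x :=
  ((hf.fderiv_right (m := 1) le_rfl).differentiableAt one_ne_zero).clm_apply
    (differentiableAt_const _)

theorem pd_apply_eq_fderiv_fderiv (hf : ContDiffAt ℝ 2 f x) (k i : Fin N) :
    pd k (pd i f) x = fderiv ℝ (fderiv ℝ f) x (Pi.single k 1) (Pi.single i 1) := by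
  have hdf : DifferentiableAt ℝ (fderiv ℝ f) x :=
    (hf.fderiv_right (m := 1) le_rfl).differentiableAt one_ne_zero
  change fderiv ℝ (fun y => fderiv ℝ f y (Pi.single i 1)) x (Pi.single k 1) = _
  rw [fderiv_clm_apply hdf (differentiableAt_const _)]
  simp

theorem pd_comm (hf : ContDiffAt ℝ 2 f x) (k i : Fin N) :
    pd k (pd i f) x = pd i (pd k f) x := by
  rw [pd_apply_eq_fderiv_fderiv hf, pd_apply_eq_fderiv_fderiv hf]
  exact hf.isSymmSndFDerivAt (by simp) _ _

end pd

section curlM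

variable {N : ℕ} {v : (Fin N → ℝ) → Fin N → ℝ} {x : Fin N → ℝ}

theorem differentiableAt_curlM (hv : ContDiffAt ℝ 2 v x) (i j : Fin N) :
    DifferentiableAt ℝ (curlM v i j) x :=
  (pd.differentiableAt (contDiffAt_pi.1 hv j) i).sub (pd.differentiableAt (contDiffAt_pi.1 hv i) j)

theorem pd_curlM_apply (hv : ContDiffAt ℝ 2 v x) (k i j : Fin N) :
    pd k (curlM v i j) x
      = pd k (pd i (fun y => v y j)) x - pd k (pd j (fun y => v y i)) x :=
  pd.sub_apply (pd.differentiableAt (contDiffAt_pi.1 hv j) i)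
    (pd.differentiableAt (contDiffAt_pi.1 hv i) j) k

theorem pd_curlM_sub_pd_curlM (hv : ContDiffAt ℝ 2 v x) (k i j : Fin N) :
    pd k (curlM v i j) x - pd j (curlM v i k) x = pd i (curlM v k j) x := by
  have hvi := contDiffAt_pi.1 hv
  rw [pd_curlM_apply hv, pd_curlM_apply hv, pd_curlM_apply hv, pd.pd_comm (hvi j) k i,
    pd.pd_comm (hvi i) k j, pd.pd_comm (hvi k) j i]
  ring

end curlM

theorem curl_gradg_dot_curl_general (N : ℕ)
    (g : (Fin N → ℝ) → ℝ) (v : (Fin N → ℝ) → Fin N → ℝ)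
    (hg : ContDiff ℝ 2 g) (hv : ContDiff ℝ 2 v) :
    ∀ (k j : Fin N) (x : Fin N → ℝ),
      curlM (fun y j' => ∑ i : Fin N, pd i g y * curlM v i j' y) k j x
        = (∑ i : Fin N, pd i g x * pd i (curlM v k j) x)
          + ∑ i : Fin N,
              (pd i (pd k g) x * curlM v i j x - pd i (pd j g) x * curlM v i k x) := by
  intro k j x
  have hgx : ContDiffAt ℝ 2 g x := hg.contDiffAt
  have hvx : ContDiffAt ℝ 2 v x := hv.contDiffAt
  have hdg i (_ : i ∈ Finset.univ) := pd.differentiableAt hgx i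
  have hdv l i (_ : i ∈ Finset.univ) := differentiableAt_curlM hvx i l
  rw [curlM, pd.sum_mul_apply _ hdg (hdv j), pd.sum_mul_apply _ hdg (hdv k),
    ← Finset.sum_sub_distrib, ← Finset.sum_add_distrib]
  refine Finset.sum_congr rfl fun i _ => ?_
  rw [pd.pd_comm hgx k i, pd.pd_comm hgx j i]
  linear_combination pd i g x * pd_curlM_sub_pd_curlM hvx k i j

/-- curl(∇g · curl v)_{kj} = (∇g·∇)(curl v)_{kj}
      + Σ_i (∂_i∂_k g (curl v)_{ij} − ∂_i∂_j g (curl v)_{ik}). -/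
theorem curl_gradg_dot_curl (N : ℕ) (hN : 1 ≤ N)
    (g : (Fin N → ℝ) → ℝ) (v : (Fin N → ℝ) → Fin N → ℝ)
    (hg : ContDiff ℝ 2 g) (hv : ContDiff ℝ 2 v) :
    ∀ (k j : Fin N) (x : Fin N → ℝ),
      curlM (fun y j' => ∑ i : Fin N, pd i g y * curlM v i j' y) k j x
        = (∑ i : Fin N, pd i g x * pd i (curlM v k j) x)
          + ∑ i : Fin N,
              (pd i (pd k g) x * curlM v i j x - pd i (pd j g) x * curlM v i k x) :=
  curl_gradg_dot_curl_general N g v hg hv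
end

section
/- Let N ≥ 1. Let ρ : ℝ × ℝ^N → ℝ and u : ℝ × ℝ^N → ℝ^N be smooth with ρ(t,x) > 0 for all (t,x). Let μ, P, φ : ℝ → ℝ be smooth functions such that for all s > 0 one has s φ'(s) = 2μ'(s), and define λ(s) := 2sμ'(s) − 2μ(s). Suppose (ρ, u) solves the compressible Navier–Stokes system pointwise: ∂_t ρ + Σ_k ∂_k(ρ u_k) = 0, and for each j, ∂_t(ρ u_j) + Σ_i ∂_i(ρ u_i u_j) − Σ_i ∂_i(2μ(ρ) D(u)_{ij}) − ∂_j(λ(ρ) div u) + ∂_j(P(ρ)) = 0, where D(u)_{ij} := (∂_i u_j + ∂_j u_i)/2 and div u := Σ_k ∂_k u_k (spatial derivatives). Define the effective velocity v := u + ∇_x(φ∘ρ). Then (ρ, v) solves: ∂_t ρ − 2Δ_x(μ∘ρ) + Σ_k ∂_k(ρ v_k) = 0, and for each j, ρ ∂_t v_j + ρ Σ_k u_k ∂_k v_j − Σ_i ∂_i(μ(ρ)(curl v)_{ij}) + ∂_j(P(ρ)) = 0, where (curl v)_{ij} := ∂_i v_j − ∂_j v_i and Δ_x := Σ_i ∂_i∂_i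 are taken in the spatial variables. -/
open scoped BigOperators

section tools
variable {N : ℕ} {f g : (Fin N → ℝ) → ℝ} {x : Fin N → ℝ} {i : Fin N}

lemma real_clm_apply (L : ℝ →L[ℝ] ℝ) (r : ℝ) : L r = r * L 1 := by
  rw [show r = r • (1:ℝ) by simp, map_smul, smul_eq_mul, smul_eq_mul]; ring

lemma pd_add (hf : DifferentiableAt ℝ f x) (hg : DifferentiableAt ℝ g x) :
    pd i (fun y => f y + g y) x = pd i f x + pd i g x := by
  simp [pd, fderiv_fun_add hf hg]

lemma pd_mul (hf : DifferentiableAt ℝ f x) (hg : DifferentiableAt ℝ g x) :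
    pd i (fun y => f y * g y) x = f x * pd i g x + g x * pd i f x := by
  simp [pd, fderiv_fun_mul hf hg]

lemma pd_const_mul (hf : DifferentiableAt ℝ f x) (c : ℝ) :
    pd i (fun y => c * f y) x = c * pd i f x := by
  simp [pd, fderiv_const_mul hf]

lemma pd_sum {ι : Type*} (s : Finset ι) (F : ι → (Fin N → ℝ) → ℝ)
    (hF : ∀ k ∈ s, DifferentiableAt ℝ (F k) x) :
    pd i (fun y => ∑ k ∈ s, F k y) x = ∑ k ∈ s, pd i (F k) x := by
  simp [pd, fderiv_fun_sum hF]

lemma pd_comp {h : ℝ → ℝ} (hh : DifferentiableAt ℝ h (f x))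
    (hf : DifferentiableAt ℝ f x) :
    pd i (fun y => h (f y)) x = deriv h (f x) * pd i f x := by
  have := fderiv_comp x hh hf
  simp only [pd]
  rw [show (fun y => h (f y)) = h ∘ f from rfl, this, ContinuousLinearMap.comp_apply,
    real_clm_apply]
  simp [fderiv_apply_one_eq_deriv, mul_comm]

lemma contDiff_pd (hf : ContDiff ℝ (⊤ : ℕ∞) f) (i : Fin N) : ContDiff ℝ (⊤ : ℕ∞) (pd i f) :=
  (hf.fderiv_right (by simp)).clm_apply contDiff_const

lemma fderiv_fderiv_symm {E' : Type*} [NormedAddCommGroup E'] [NormedSpace ℝ E']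
    {F : E' → ℝ} (hF : ContDiff ℝ (⊤ : ℕ∞) F) (q : E') (a b : E') :
    fderiv ℝ (fun p => fderiv ℝ F p a) q b = fderiv ℝ (fun p => fderiv ℝ F p b) q a := by
  have hsym := (hF.contDiffAt (x := q)).isSymmSndFDerivAt (by rw [minSmoothness_of_isRCLikeNormedField]; exact WithTop.coe_le_coe.mpr (le_top : (2 : ℕ∞) ≤ ⊤))
  have hc : DifferentiableAt ℝ (fderiv ℝ F) q :=
    ((hF.fderiv_right (m := (⊤ : ℕ∞)) (by simp)).differentiable (by simp)).differentiableAt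
  have key : ∀ c : E', fderiv ℝ (fun p => fderiv ℝ F p c) q
      = (fderiv ℝ (fderiv ℝ F) q).flip c := by
    intro c
    rw [fderiv_clm_apply hc (differentiableAt_const c)]
    simp
  rw [key a, key b]
  simp only [ContinuousLinearMap.flip_apply]
  exact hsym.eq b a

lemma pd_comm (hf : ContDiff ℝ (⊤ : ℕ∞) f) (i j : Fin N) (x : Fin N → ℝ) :
    pd i (pd j f) x = pd j (pd i f) x := by
  simp only [pd]
  exact fderiv_fderiv_symm hf x (Pi.single j 1) (Pi.single i 1)

end tools

section slice
variable {N : ℕ} {F : ℝ × (Fin N → ℝ) → ℝ} {t : ℝ} {x : Fin N → ℝ}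

lemma pd_neg {f : (Fin N → ℝ) → ℝ} {x : Fin N → ℝ} (i : Fin N) :
    pd i (fun y => -f y) x = -pd i f x := by
  simp [pd, fderiv_neg]

lemma pd_sub {f g : (Fin N → ℝ) → ℝ} {x : Fin N → ℝ} (i : Fin N)
    (hf : DifferentiableAt ℝ f x) (hg : DifferentiableAt ℝ g x) :
    pd i (fun y => f y - g y) x = pd i f x - pd i g x := by
  simp [pd, fderiv_fun_sub hf hg]

lemma pd_slice (hF : DifferentiableAt ℝ F (t, x)) (j : Fin N) :
    pd j (fun y => F (t, y)) x = fderiv ℝ F (t, x) (0, Pi.single j 1) := by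
  have h1 : HasFDerivAt (fun y : Fin N → ℝ => ((t : ℝ), y))
      (ContinuousLinearMap.inr ℝ ℝ (Fin N → ℝ)) x := hasFDerivAt_prodMk_right t x
  have h2 : HasFDerivAt (fun y => F (t, y))
      ((fderiv ℝ F (t, x)).comp (ContinuousLinearMap.inr ℝ ℝ (Fin N → ℝ))) x :=
    hF.hasFDerivAt.comp x h1
  simp only [pd, h2.fderiv, ContinuousLinearMap.comp_apply, ContinuousLinearMap.inr_apply]

lemma deriv_slice (hF : DifferentiableAt ℝ F (t, x)) :
    deriv (fun s => F (s, x)) t = fderiv ℝ F (t, x) (1, 0) := by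
  have h1 : HasFDerivAt (fun s : ℝ => (s, x))
      (ContinuousLinearMap.inl ℝ ℝ (Fin N → ℝ)) t := hasFDerivAt_prodMk_left t x
  have h2 : HasDerivAt (fun s => F (s, x))
      (((fderiv ℝ F (t, x)).comp (ContinuousLinearMap.inl ℝ ℝ (Fin N → ℝ))) 1) t :=
    (hF.hasFDerivAt.comp t h1).hasDerivAt
  rw [h2.deriv]
  simp

lemma contDiff_pd_slice (hF : ContDiff ℝ (⊤ : ℕ∞) F) (j : Fin N) :
    ContDiff ℝ (⊤ : ℕ∞) (fun p : ℝ × (Fin N → ℝ) => pd j (fun y => F (p.1, y)) p.2) := by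
  have e : (fun p : ℝ × (Fin N → ℝ) => pd j (fun y => F (p.1, y)) p.2)
      = fun p => fderiv ℝ F p (0, Pi.single j 1) := by
    funext p
    have := pd_slice (t := p.1) (x := p.2) ((hF.differentiable (by simp)) (p.1, p.2)) j
    simpa using this
  rw [e]
  exact (hF.fderiv_right (by simp)).clm_apply contDiff_const

lemma deriv_pd_swap (hF : ContDiff ℝ (⊤ : ℕ∞) F) (t : ℝ) (x : Fin N → ℝ) (j : Fin N) :
    deriv (fun s => pd j (fun y => F (s, y)) x) t
      = pd j (fun y => deriv (fun s => F (s, y)) t) x := by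
  have hdF : Differentiable ℝ F := hF.differentiable (by simp)
  have hG : ContDiff ℝ (⊤ : ℕ∞) (fun p : ℝ × (Fin N → ℝ) => fderiv ℝ F p (0, Pi.single j 1)) :=
    (hF.fderiv_right (by simp)).clm_apply contDiff_const
  have hG' : ContDiff ℝ (⊤ : ℕ∞) (fun p : ℝ × (Fin N → ℝ) => fderiv ℝ F p (1, 0)) :=
    (hF.fderiv_right (by simp)).clm_apply contDiff_const
  have e1 : (fun s => pd j (fun y => F (s, y)) x)
      = fun s => (fun p : ℝ × (Fin N → ℝ) => fderiv ℝ F p (0, Pi.single j 1)) (s, x) :=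
    funext fun s => pd_slice (hdF _) j
  have e2 : (fun y => deriv (fun s => F (s, y)) t)
      = fun y => (fun p : ℝ × (Fin N → ℝ) => fderiv ℝ F p ((1 : ℝ), 0)) (t, y) :=
    funext fun y => deriv_slice (hdF _)
  rw [e1, e2, deriv_slice ((hG.differentiable (by simp)) _),
    pd_slice ((hG'.differentiable (by simp)) _) j]
  exact fderiv_fderiv_symm hF (t, x) (0, Pi.single j 1) (1, 0)

end slice

/-- Reformulation of the compressible Navier–Stokes equations with the
effective velocity `v = u + ∇φ(ρ)` under the Bresch–Desjardins relation
`λ(s) = 2sμ'(s) − 2μ(s)`, `sφ'(s) = 2μ'(s)` (Proposition 6.9). -/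


theorem navier_stokes_effective_velocity_reformulation (N : ℕ) (hN : 1 ≤ N)
    (ρ : ℝ → (Fin N → ℝ) → ℝ) (u : ℝ → (Fin N → ℝ) → Fin N → ℝ)
    (hρ : ContDiff ℝ (⊤ : ℕ∞) (fun p : ℝ × (Fin N → ℝ) => ρ p.1 p.2))
    (hu : ContDiff ℝ (⊤ : ℕ∞) (fun p : ℝ × (Fin N → ℝ) => u p.1 p.2))
    (hρpos : ∀ t x, 0 < ρ t x)
    (μ P φ : ℝ → ℝ)
    (hμ : ContDiff ℝ (⊤ : ℕ∞) μ) (hP : ContDiff ℝ (⊤ : ℕ∞) P) (hφ : ContDiff ℝ (⊤ : ℕ∞) φ)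
    (hcompat : ∀ s : ℝ, 0 < s → s * deriv φ s = 2 * deriv μ s)
    (lam : ℝ → ℝ) (hlam : ∀ s, lam s = 2 * s * deriv μ s - 2 * μ s)
    -- mass equation: ∂_t ρ + div(ρ u) = 0
    (hmass : ∀ t x, deriv (fun s => ρ s x) t
        + ∑ k : Fin N, pd k (fun y => ρ t y * u t y k) x = 0)
    -- momentum equation:
    -- ∂_t(ρu_j) + div(ρ u u_j) − div(2μ(ρ)D(u)·e_j) − ∂_j(λ(ρ) div u) + ∂_j P(ρ) = 0
    (hmom : ∀ t x (j : Fin N),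
      deriv (fun s => ρ s x * u s x j) t
        + (∑ i : Fin N, pd i (fun y => ρ t y * u t y i * u t y j) x)
        - (∑ i : Fin N, pd i (fun y => 2 * μ (ρ t y)
            * ((pd i (fun z => u t z j) y + pd j (fun z => u t z i) y) / 2)) x)
        - pd j (fun y => lam (ρ t y) * ∑ k : Fin N, pd k (fun z => u t z k) y) x
        + pd j (fun y => P (ρ t y)) x = 0)
    -- effective velocity v = u + ∇φ(ρ)
    (v : ℝ → (Fin N → ℝ) → Fin N → ℝ)
    (hv : ∀ t x (k : Fin N), v t x k = u t x k + pd k (fun y => φ (ρ t y)) x) :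
    -- new mass equation: ∂_t ρ − 2Δμ(ρ) + div(ρ v) = 0
    (∀ t x, deriv (fun s => ρ s x) t
        - 2 * (∑ i : Fin N, pd i (pd i (fun y => μ (ρ t y))) x)
        + ∑ k : Fin N, pd k (fun y => ρ t y * v t y k) x = 0)
    -- new momentum equation: ρ∂_t v + ρ u·∇v − div(μ(ρ) curl v) + ∇P(ρ) = 0
    ∧ (∀ t x (j : Fin N),
      ρ t x * deriv (fun s => v s x j) t
        + ρ t x * (∑ k : Fin N, u t x k * pd k (fun y => v t y j) x)
        - (∑ i : Fin N, pd i (fun y => μ (ρ t y) * curlM (v t) i j y) x)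
        + pd j (fun y => P (ρ t y)) x = 0) := by
  -- global smoothness facts
  have hRx : ∀ t, ContDiff ℝ (⊤ : ℕ∞) (fun y => ρ t y) := fun t =>
    hρ.comp (contDiff_const.prodMk contDiff_id)
  have hRt : ∀ x, ContDiff ℝ (⊤ : ℕ∞) (fun s => ρ s x) := fun x =>
    hρ.comp (contDiff_id.prodMk contDiff_const)
  have huk : ∀ k, ContDiff ℝ (⊤ : ℕ∞) (fun p : ℝ × (Fin N → ℝ) => u p.1 p.2 k) := fun k =>
    contDiff_pi.mp hu k
  have hUx : ∀ t k, ContDiff ℝ (⊤ : ℕ∞) (fun y => u t y k) := fun t k =>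
    (huk k).comp (contDiff_const.prodMk contDiff_id)
  have hUt : ∀ x k, ContDiff ℝ (⊤ : ℕ∞) (fun s => u s x k) := fun x k =>
    (huk k).comp (contDiff_id.prodMk contDiff_const)
  have hφ' : ContDiff ℝ (⊤ : ℕ∞) (deriv φ) := (hφ.fderiv_right (by simp)).clm_apply contDiff_const
  have hμ' : ContDiff ℝ (⊤ : ℕ∞) (deriv μ) := (hμ.fderiv_right (by simp)).clm_apply contDiff_const
  have hφd : ∀ s : ℝ, DifferentiableAt ℝ φ s := fun s => ((hφ.differentiable (by simp)) s)
  have hμd : ∀ s : ℝ, DifferentiableAt ℝ μ s := fun s => ((hμ.differentiable (by simp)) s)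
  constructor
  · -- mass equation
    intro t x
    have hRd : ∀ y, DifferentiableAt ℝ (fun y => ρ t y) y := fun y =>
      ((hRx t).differentiable (by simp)) y
    have hUd : ∀ k y, DifferentiableAt ℝ (fun y => u t y k) y := fun k y =>
      ((hUx t k).differentiable (by simp)) y
    have hMc : ContDiff ℝ (⊤ : ℕ∞) (fun y => μ (ρ t y)) := hμ.comp (hRx t)
    have key : ∀ (k : Fin N) (y), ρ t y * pd k (fun z => φ (ρ t z)) y
        = 2 * pd k (fun z => μ (ρ t z)) y := by
      intro k y
      rw [pd_comp (hφd _) (hRd y), pd_comp (hμd _) (hRd y)]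
      have h := hcompat (ρ t y) (hρpos t y)
      linear_combination pd k (fun z => ρ t z) y * h
    have hexp : ∀ k : Fin N, pd k (fun y => ρ t y * v t y k) x
        = pd k (fun y => ρ t y * u t y k) x
          + 2 * pd k (pd k (fun y => μ (ρ t y))) x := by
      intro k
      have e1 : (fun y => ρ t y * v t y k)
          = fun y => ρ t y * u t y k + 2 * pd k (fun z => μ (ρ t z)) y := by
        funext y
        rw [hv t y k, mul_add, key k y]
      rw [e1, pd_add ((hRd x).fun_mul (hUd k x))
            ((((contDiff_pd hMc k).differentiable (by simp)) x).const_mul 2),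
          pd_const_mul (((contDiff_pd hMc k).differentiable (by simp)) x) 2]
    have hsum : ∑ k : Fin N, pd k (fun y => ρ t y * v t y k) x
        = (∑ k : Fin N, pd k (fun y => ρ t y * u t y k) x)
          + 2 * ∑ k : Fin N, pd k (pd k (fun y => μ (ρ t y))) x := by
      rw [Finset.sum_congr rfl fun k _ => hexp k, Finset.sum_add_distrib, Finset.mul_sum]
    have hm := hmass t x
    rw [hsum]
    linarith [hm]
  · -- momentum equation
    intro t x j
    have hRd : ∀ y, DifferentiableAt ℝ (fun y => ρ t y) y := fun y =>
      ((hRx t).differentiable (by simp)) y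
    have hUd : ∀ k y, DifferentiableAt ℝ (fun y => u t y k) y := fun k y =>
      ((hUx t k).differentiable (by simp)) y
    have hΦc : ContDiff ℝ (⊤ : ℕ∞) (fun y => φ (ρ t y)) := hφ.comp (hRx t)
    have hdφρ : ContDiff ℝ (⊤ : ℕ∞) (fun y => deriv φ (ρ t y)) := hφ'.comp (hRx t)
    have hμρ : ContDiff ℝ (⊤ : ℕ∞) (fun y => μ (ρ t y)) := hμ.comp (hRx t)
    have hdμρ : ContDiff ℝ (⊤ : ℕ∞) (fun y => deriv μ (ρ t y)) := hμ'.comp (hRx t)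
    have hρu : ∀ k, ContDiff ℝ (⊤ : ℕ∞) (fun y => ρ t y * u t y k) := fun k =>
      (hRx t).mul (hUx t k)
    have hSc : ContDiff ℝ (⊤ : ℕ∞) (fun y => ∑ k : Fin N, pd k (fun z => ρ t z * u t z k) y) :=
      ContDiff.sum fun k _ => contDiff_pd (hρu k) k
    have hSneg : ContDiff ℝ (⊤ : ℕ∞) (fun y => -∑ k : Fin N, pd k (fun z => ρ t z * u t z k) y) :=
      hSc.neg
    have hdivU : ContDiff ℝ (⊤ : ℕ∞) (fun y => ∑ k : Fin N, pd k (fun z => u t z k) y) :=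
      ContDiff.sum fun k _ => contDiff_pd (hUx t k) k
    -- scalar compatibility relations at ρ t x
    have hc1 : ρ t x * deriv φ (ρ t x) = 2 * deriv μ (ρ t x) := hcompat _ (hρpos t x)
    have hc2 : deriv φ (ρ t x) + ρ t x * deriv (deriv φ) (ρ t x)
        = 2 * deriv (deriv μ) (ρ t x) := by
      have hev : (fun s => s * deriv φ s) =ᶠ[nhds (ρ t x)] fun s => 2 * deriv μ s :=
        Filter.eventually_of_mem (Ioi_mem_nhds (hρpos t x)) fun s hs => hcompat s hs
      have h1 := hev.deriv_eq
      rw [deriv_fun_mul differentiableAt_fun_id ((hφ'.differentiable (by simp)) _),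
        deriv_id'', one_mul, deriv_const_mul 2 ((hμ'.differentiable (by simp)) _)] at h1
      exact h1
    -- time derivative of ρ from mass equation, as a function of y
    have X1 : ∀ y, deriv (fun s => ρ s y) t
        = -∑ k : Fin N, pd k (fun z => ρ t z * u t z k) y := fun y => by
      linarith [hmass t y]
    -- expansion of the mass equation at x
    have hpdmul : ∀ (k : Fin N) (y), pd k (fun z => ρ t z * u t z k) y
        = ρ t y * pd k (fun z => u t z k) y + u t y k * pd k (fun z => ρ t z) y :=
      fun k y => pd_mul (hRd y) (hUd k y)
    have hmassx : deriv (fun s => ρ s x) t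
        + (ρ t x * (∑ k : Fin N, pd k (fun y => u t y k) x)
          + ∑ k : Fin N, u t x k * pd k (fun y => ρ t y) x) = 0 := by
      have h := hmass t x
      rw [Finset.sum_congr rfl fun k _ => hpdmul k x, Finset.sum_add_distrib,
        ← Finset.mul_sum] at h
      linarith [h]
    -- expansion of A = ∑ₖ ∂ⱼ ∂ₖ (ρ uₖ)
    have eX6 : ∀ k ∈ Finset.univ, pd j (pd k (fun z => ρ t z * u t z k)) x
        = ρ t x * pd j (pd k (fun y => u t y k)) x
          + pd j (fun y => ρ t y) x * pd k (fun y => u t y k) x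
          + u t x k * pd j (pd k (fun y => ρ t y)) x
          + pd k (fun y => ρ t y) x * pd j (fun y => u t y k) x := by
      intro k _
      have e : pd k (fun z => ρ t z * u t z k)
          = fun y => ρ t y * pd k (fun z => u t z k) y
            + u t y k * pd k (fun z => ρ t z) y := funext fun y => hpdmul k y
      rw [e, pd_add ((hRd x).fun_mul (((contDiff_pd (hUx t k) k).differentiable (by simp)) x))
          ((hUd k x).fun_mul (((contDiff_pd (hRx t) k).differentiable (by simp)) x)),
        pd_mul (hRd x) (((contDiff_pd (hUx t k) k).differentiable (by simp)) x),
        pd_mul (hUd k x) (((contDiff_pd (hRx t) k).differentiable (by simp)) x)]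
      ring
    have hAe : ∑ k : Fin N, pd j (pd k (fun z => ρ t z * u t z k)) x
        = ρ t x * (∑ k : Fin N, pd j (pd k (fun y => u t y k)) x)
          + pd j (fun y => ρ t y) x * (∑ k : Fin N, pd k (fun y => u t y k) x)
          + (∑ k : Fin N, u t x k * pd j (pd k (fun y => ρ t y)) x)
          + ∑ k : Fin N, pd k (fun y => ρ t y) x * pd j (fun y => u t y k) x := by
      rw [Finset.sum_congr rfl eX6]
      simp only [Finset.sum_add_distrib, Finset.mul_sum]
    -- goal term 1 : time derivative of v
    have hterm1 : deriv (fun s => v s x j) t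
        = deriv (fun s => u s x j) t
          + (deriv φ (ρ t x)
              * -(∑ k : Fin N, pd j (pd k (fun z => ρ t z * u t z k)) x)
            + deriv (fun s => ρ s x) t
              * (deriv (deriv φ) (ρ t x) * pd j (fun y => ρ t y) x)) := by
      have e0 : (fun s => v s x j) = fun s => u s x j + pd j (fun y => φ (ρ s y)) x :=
        funext fun s => hv s x j
      have hd1 : DifferentiableAt ℝ (fun s => u s x j) t := ((hUt x j).differentiable (by simp)) t
      have hFφ : ContDiff ℝ (⊤ : ℕ∞) (fun p : ℝ × (Fin N → ℝ) => φ (ρ p.1 p.2)) := hφ.comp hρ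
      have hd2 : DifferentiableAt ℝ (fun s => pd j (fun y => φ (ρ s y)) x) t := by
        have h3 : ContDiff ℝ (⊤ : ℕ∞) (fun s : ℝ => pd j (fun y => φ (ρ s y)) x) :=
          (contDiff_pd_slice hFφ j).comp
            ((contDiff_id.prodMk contDiff_const : ContDiff ℝ (⊤ : ℕ∞) fun s : ℝ => (s, x)))
        exact (h3.differentiable (by simp)) t
      rw [e0, deriv_fun_add hd1 hd2, deriv_pd_swap hFφ t x j]
      have e4 : (fun y => deriv (fun s => φ (ρ s y)) t)
          = fun y => deriv φ (ρ t y)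
              * -∑ k : Fin N, pd k (fun z => ρ t z * u t z k) y := by
        funext y
        have e5 : deriv (fun s => φ (ρ s y)) t
            = deriv φ (ρ t y) * deriv (fun s => ρ s y) t :=
          deriv_comp t (hφd _) (((hRt y).differentiable (by simp)) t)
        rw [e5, X1 y]
      rw [e4, pd_mul ((hdφρ.differentiable (by simp)) x) ((hSneg.differentiable (by simp)) x),
        pd_neg j, pd_sum Finset.univ _
          (fun k _ => ((contDiff_pd (hρu k) k).differentiable (by simp)) x),
        pd_comp ((hφ'.differentiable (by simp)) _) (hRd x), ← X1 x]
    -- goal term 2 : convective term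
    have et2 : ∀ k ∈ Finset.univ, u t x k * pd k (fun y => v t y j) x
        = u t x k * pd k (fun y => u t y j) x
          + deriv φ (ρ t x) * (u t x k * pd j (pd k (fun y => ρ t y)) x)
          + deriv (deriv φ) (ρ t x) * pd j (fun y => ρ t y) x
              * (u t x k * pd k (fun y => ρ t y) x) := by
      intro k _
      have e0 : (fun y => v t y j) = fun y => u t y j + pd j (fun z => φ (ρ t z)) y :=
        funext fun y => hv t y j
      have eΦ : pd j (fun z => φ (ρ t z))
          = fun y => deriv φ (ρ t y) * pd j (fun z => ρ t z) y :=
        funext fun y => pd_comp (hφd _) (hRd y)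
      rw [e0, pd_add (hUd j x) (((contDiff_pd hΦc j).differentiable (by simp)) x), eΦ,
        pd_mul ((hdφρ.differentiable (by simp)) x)
          (((contDiff_pd (hRx t) j).differentiable (by simp)) x),
        pd_comp ((hφ'.differentiable (by simp)) _) (hRd x), pd_comm (hRx t) k j x]
      ring
    have hterm2 : ∑ k : Fin N, u t x k * pd k (fun y => v t y j) x
        = (∑ k : Fin N, u t x k * pd k (fun y => u t y j) x)
          + deriv φ (ρ t x) * (∑ k : Fin N, u t x k * pd j (pd k (fun y => ρ t y)) x)
          + deriv (deriv φ) (ρ t x) * pd j (fun y => ρ t y) x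
              * (∑ k : Fin N, u t x k * pd k (fun y => ρ t y) x) := by
      rw [Finset.sum_congr rfl et2]
      simp only [Finset.sum_add_distrib, Finset.mul_sum]
    -- goal term 3 : diffusion term with curl
    have et3 : ∀ i ∈ Finset.univ, pd i (fun y => μ (ρ t y) * curlM (v t) i j y) x
        = μ (ρ t x) * pd i (pd i (fun y => u t y j)) x
          - μ (ρ t x) * pd j (pd i (fun y => u t y i)) x
          + (deriv μ (ρ t x) * (pd i (fun y => ρ t y) x * pd i (fun y => u t y j) x)
            - deriv μ (ρ t x) * (pd i (fun y => ρ t y) x * pd j (fun y => u t y i) x)) := by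
      intro i _
      have ecurl : (fun y => μ (ρ t y) * curlM (v t) i j y)
          = fun y => μ (ρ t y)
              * (pd i (fun z => u t z j) y - pd j (fun z => u t z i) y) := by
        funext y
        have e1 : (fun z => v t z j) = fun z => u t z j + pd j (fun w => φ (ρ t w)) z :=
          funext fun z => hv t z j
        have e2 : (fun z => v t z i) = fun z => u t z i + pd i (fun w => φ (ρ t w)) z :=
          funext fun z => hv t z i
        simp only [curlM, e1, e2]
        rw [pd_add (hUd j y) (((contDiff_pd hΦc j).differentiable (by simp)) y),
          pd_add (hUd i y) (((contDiff_pd hΦc i).differentiable (by simp)) y),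
          pd_comm hΦc i j y]
        ring
      rw [ecurl, pd_mul ((hμρ.differentiable (by simp)) x)
          ((((contDiff_pd (hUx t j) i).differentiable (by simp)) x).fun_sub
            (((contDiff_pd (hUx t i) j).differentiable (by simp)) x)),
        pd_sub i (((contDiff_pd (hUx t j) i).differentiable (by simp)) x)
          (((contDiff_pd (hUx t i) j).differentiable (by simp)) x),
        pd_comm (hUx t i) i j x, pd_comp (hμd _) (hRd x)]
      ring
    have hterm3 : ∑ i : Fin N, pd i (fun y => μ (ρ t y) * curlM (v t) i j y) x
        = (μ (ρ t x) * (∑ i : Fin N, pd i (pd i (fun y => u t y j)) x)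
            - μ (ρ t x) * (∑ i : Fin N, pd j (pd i (fun y => u t y i)) x))
          + (deriv μ (ρ t x)
              * (∑ i : Fin N, pd i (fun y => ρ t y) x * pd i (fun y => u t y j) x)
            - deriv μ (ρ t x)
              * (∑ i : Fin N, pd i (fun y => ρ t y) x * pd j (fun y => u t y i) x)) := by
      rw [Finset.sum_congr rfl et3]
      simp only [Finset.sum_add_distrib, Finset.sum_sub_distrib, Finset.mul_sum]
    -- pressure term
    have eP : pd j (fun y => P (ρ t y)) x = deriv P (ρ t x) * pd j (fun y => ρ t y) x :=
      pd_comp ((hP.differentiable (by simp)) _) (hRd x)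
    -- expansion of the momentum equation
    have hm1 : deriv (fun s => ρ s x * u s x j) t
        = deriv (fun s => ρ s x) t * u t x j + ρ t x * deriv (fun s => u s x j) t :=
      deriv_fun_mul (((hRt x).differentiable (by simp)) t) (((hUt x j).differentiable (by simp)) t)
    have eb : ∀ i ∈ Finset.univ, pd i (fun y => ρ t y * u t y i * u t y j) x
        = ρ t x * (u t x i * pd i (fun y => u t y j) x)
          + ρ t x * u t x j * pd i (fun y => u t y i) x
          + u t x j * (u t x i * pd i (fun y => ρ t y) x) := by
      intro i _
      rw [pd_mul ((hRd x).fun_mul (hUd i x)) (hUd j x), pd_mul (hRd x) (hUd i x)]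
      ring
    have hm2 : ∑ i : Fin N, pd i (fun y => ρ t y * u t y i * u t y j) x
        = ρ t x * (∑ k : Fin N, u t x k * pd k (fun y => u t y j) x)
          + ρ t x * u t x j * (∑ k : Fin N, pd k (fun y => u t y k) x)
          + u t x j * (∑ k : Fin N, u t x k * pd k (fun y => ρ t y) x) := by
      rw [Finset.sum_congr rfl eb]
      simp only [Finset.sum_add_distrib, Finset.mul_sum]
    have ec : ∀ i ∈ Finset.univ, pd i (fun y => 2 * μ (ρ t y)
          * ((pd i (fun z => u t z j) y + pd j (fun z => u t z i) y) / 2)) x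
        = μ (ρ t x) * pd i (pd i (fun y => u t y j)) x
          + μ (ρ t x) * pd j (pd i (fun y => u t y i)) x
          + (deriv μ (ρ t x) * (pd i (fun y => ρ t y) x * pd i (fun y => u t y j) x)
            + deriv μ (ρ t x) * (pd i (fun y => ρ t y) x * pd j (fun y => u t y i) x)) := by
      intro i _
      have efun : (fun y => 2 * μ (ρ t y)
            * ((pd i (fun z => u t z j) y + pd j (fun z => u t z i) y) / 2))
          = fun y => μ (ρ t y)
              * (pd i (fun z => u t z j) y + pd j (fun z => u t z i) y) := by
        funext y; ring
      rw [efun, pd_mul ((hμρ.differentiable (by simp)) x)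
          ((((contDiff_pd (hUx t j) i).differentiable (by simp)) x).fun_add
            (((contDiff_pd (hUx t i) j).differentiable (by simp)) x)),
        pd_add (((contDiff_pd (hUx t j) i).differentiable (by simp)) x)
          (((contDiff_pd (hUx t i) j).differentiable (by simp)) x),
        pd_comm (hUx t i) i j x, pd_comp (hμd _) (hRd x)]
      ring
    have hm3 : ∑ i : Fin N, pd i (fun y => 2 * μ (ρ t y)
          * ((pd i (fun z => u t z j) y + pd j (fun z => u t z i) y) / 2)) x
        = μ (ρ t x) * (∑ i : Fin N, pd i (pd i (fun y => u t y j)) x)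
          + μ (ρ t x) * (∑ i : Fin N, pd j (pd i (fun y => u t y i)) x)
          + (deriv μ (ρ t x)
              * (∑ i : Fin N, pd i (fun y => ρ t y) x * pd i (fun y => u t y j) x)
            + deriv μ (ρ t x)
              * (∑ i : Fin N, pd i (fun y => ρ t y) x * pd j (fun y => u t y i) x)) := by
      rw [Finset.sum_congr rfl ec]
      simp only [Finset.sum_add_distrib, Finset.mul_sum]
    have hm4 : pd j (fun y => lam (ρ t y) * ∑ k : Fin N, pd k (fun z => u t z k) y) x
        = (2 * (ρ t x * deriv μ (ρ t x)) - 2 * μ (ρ t x))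
            * (∑ k : Fin N, pd j (pd k (fun y => u t y k)) x)
          + (∑ k : Fin N, pd k (fun y => u t y k) x)
            * (2 * (ρ t x * deriv (deriv μ) (ρ t x)) * pd j (fun y => ρ t y) x) := by
      have elam : (fun y => lam (ρ t y) * ∑ k : Fin N, pd k (fun z => u t z k) y)
          = fun y => (2 * (ρ t y * deriv μ (ρ t y)) - 2 * μ (ρ t y))
              * ∑ k : Fin N, pd k (fun z => u t z k) y := by
        funext y; rw [hlam]; ring
      have hf1 : ContDiff ℝ (⊤ : ℕ∞) (fun y => 2 * (ρ t y * deriv μ (ρ t y)) - 2 * μ (ρ t y)) :=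
        (contDiff_const.mul ((hRx t).mul hdμρ)).sub (contDiff_const.mul hμρ)
      rw [elam, pd_mul ((hf1.differentiable (by simp)) x) ((hdivU.differentiable (by simp)) x),
        pd_sub j (((contDiff_const.mul ((hRx t).mul hdμρ)
            : ContDiff ℝ (⊤ : ℕ∞) fun y => 2 * (ρ t y * deriv μ (ρ t y))).differentiable (by simp)) x)
          (((contDiff_const.mul hμρ
            : ContDiff ℝ (⊤ : ℕ∞) fun y => 2 * μ (ρ t y)).differentiable (by simp)) x),
        pd_const_mul (((hRx t).mul hdμρ).differentiable (by simp) x) 2,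
        pd_const_mul ((hμρ.differentiable (by simp)) x) 2,
        pd_mul (hRd x) ((hdμρ.differentiable (by simp)) x),
        pd_comp ((hμ'.differentiable (by simp)) _) (hRd x),
        pd_comp (hμd _) (hRd x),
        pd_sum Finset.univ _ (fun k _ => ((contDiff_pd (hUx t k) k).differentiable (by simp)) x)]
      ring
    have HM := hmom t x j
    rw [hm1, hm2, hm3, hm4, eP] at HM
    rw [hterm1, hterm2, hterm3, eP]
    linear_combination HM
      + (ρ t x * deriv (deriv φ) (ρ t x) * pd j (fun y => ρ t y) x - u t x j) * hmassx
      - (ρ t x * deriv φ (ρ t x)) * hAe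
      - ((∑ k : Fin N, pd k (fun y => ρ t y) x * pd j (fun y => u t y k) x)
          + ρ t x * (∑ k : Fin N, pd j (pd k (fun y => u t y k)) x)) * hc1
      - (ρ t x * pd j (fun y => ρ t y) x * (∑ k : Fin N, pd k (fun y => u t y k) x)) * hc2
end
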